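/- arXiv:2010.12756 — 2 statements merged into one kernel-verified Lean document; each statement's English description precedes it below -/
import Mathlib

section
/- For any bounded linear operators A and B on a complex Hilbert space, ω(A + B) ≤ (1/√2) · ω((|A| + |A*|) + i(|B| + |B*|)). -/
open scoped InnerProductSpace
open ContinuousLinearMap

variable {H : Type*} [NormedAddCommGroup H] [InnerProductSpace ℂ H] [CompleteSpace H]

/-- The numerical radius of a bounded operator. -/
noncomputable def numRadius (T : H →L[ℂ] H) : ℝ :=
  ⨆ x : {x : H // ‖x‖ = 1}, ‖⟪T x.1, x.1⟫_ℂ‖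

/-- The absolute value |A| = (A*A)^(1/2). -/
noncomputable def opAbs (A : H →L[ℂ] H) : H →L[ℂ] H := CFC.sqrt (adjoint A * A)

/-- Real part of the Cartesian decomposition. -/
noncomputable def reP (T : H →L[ℂ] H) : H →L[ℂ] H := (2:ℂ)⁻¹ • (T + adjoint T)

/-- Imaginary part of the Cartesian decomposition. -/
noncomputable def imP (T : H →L[ℂ] H) : H →L[ℂ] H := (2*Complex.I:ℂ)⁻¹ • (T - adjoint T)

/-!
For `c = |a| + ε` (positive and invertible), expanding `0 ≤ (1 - a c⁻¹) c (1 - a c⁻¹)*` gives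
`a + a* ≤ c + a c⁻¹ a*`. Moreover `a c⁻¹ a* ≤ |a*|`, because its square `a (c⁻¹ a*a c⁻¹) a*` is at
most `a a*` and the square root is operator monotone. Letting `ε → 0` yields `a + a* ≤ |a| + |a*|`
in any C⋆-algebra. Applied to `u • T` with `u = ⟪T x, x⟫` (note
`|u • T| = ‖u‖ |T|`) it gives `2 ‖⟪T x, x⟫‖ ≤ ⟪(|T| + |T*|) x, x⟫`. Writing `p` and `q` for these
right-hand sides for `A` and `B`, the triangle inequality bounds `‖⟪(A + B) x, x⟫‖` by
`(p + q) / 2 ≤ ‖p - i q‖ / √2`, and `p - i q = ⟪((|A| + |A*|) + i (|B| + |B*|)) x, x⟫`.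
-/

open Filter Topology

section CStarAlgebra

variable {A : Type*} [CStarAlgebra A] [PartialOrder A] [StarOrderedRing A]

lemma add_star_le_add_mul_inv_mul_star (a : A) (u : Aˣ) (hu : 0 ≤ (u : A)) :
    a + star a ≤ u + a * ↑u⁻¹ * star a := by
  have hinv : star (↑u⁻¹ : A) = ↑u⁻¹ := (CFC.inv_nonneg_of_nonneg u hu).isSelfAdjoint.star_eq
  have h := star_right_conjugate_nonneg hu (1 - a * ↑u⁻¹)
  have hexp : (1 - a * ↑u⁻¹) * ↑u * star (1 - a * ↑u⁻¹)
      = (u + a * ↑u⁻¹ * star a) - (a + star a) := by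
    simp only [star_sub, star_one, star_mul, hinv, sub_mul, mul_sub, one_mul, mul_one, mul_assoc,
      Units.inv_mul, Units.mul_inv_cancel_left]
    abel
  rwa [hexp, sub_nonneg] at h

lemma mul_mul_star_le_abs_star (a d : A) (hd : 0 ≤ d) (h : d * (star a * a) * d ≤ 1) :
    a * d * star a ≤ CFC.abs (star a) := by
  have hsq : (a * d * star a) ^ 2 ≤ a * star a :=
    calc (a * d * star a) ^ 2 = a * (d * (star a * a) * d) * star a := by
          simp only [sq, mul_assoc]
      _ ≤ a * 1 * star a := star_right_conjugate_le_conjugate h a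
      _ = a * star a := by rw [mul_one]
  calc a * d * star a = CFC.sqrt ((a * d * star a) ^ 2) :=
        (CFC.sqrt_sq _ (star_right_conjugate_nonneg hd a)).symm
    _ ≤ CFC.sqrt (a * star a) := CFC.sqrt_le_sqrt _ _ hsq
    _ = CFC.abs (star a) := by rw [CFC.abs, star_star]

lemma star_mul_self_le_abs_add_smul_one_mul_self (a : A) {ε : ℝ} (hε : 0 ≤ ε) :
    star a * a ≤ (CFC.abs a + ε • 1) * (CFC.abs a + ε • 1) := by
  rw [← CFC.abs_mul_abs, ← sub_nonneg]
  have hexp : (CFC.abs a + ε • 1) * (CFC.abs a + ε • 1) - CFC.abs a * CFC.abs a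
      = (2 * ε) • CFC.abs a + (ε * ε) • (1 : A) := by
    simp only [add_mul, mul_add, smul_mul_assoc, mul_smul_comm, one_mul, mul_one]
    module
  rw [hexp]
  exact add_nonneg (smul_nonneg (by positivity) (CFC.abs_nonneg a))
    (smul_nonneg (by positivity) zero_le_one)

lemma add_star_le_abs_add_abs_star_add_smul_one (a : A) {ε : ℝ} (hε : 0 < ε) :
    a + star a ≤ CFC.abs a + CFC.abs (star a) + ε • 1 := by
  set c := CFC.abs a + ε • (1 : A)
  have hc : IsStrictlyPositive c :=
    (IsStrictlyPositive.smul hε isStrictlyPositive_one).nonneg_add (CFC.abs_nonneg a)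
  set u := hc.isUnit.unit
  have hu : (u : A) = c := hc.isUnit.unit_spec
  have hu_inv : 0 ≤ (↑u⁻¹ : A) := CFC.inv_nonneg_of_nonneg u (hu ▸ hc.nonneg)
  have hconj : ↑u⁻¹ * (star a * a) * ↑u⁻¹ ≤ 1 :=
    calc ↑u⁻¹ * (star a * a) * ↑u⁻¹ ≤ ↑u⁻¹ * (c * c) * ↑u⁻¹ := by
          simpa only [hu_inv.isSelfAdjoint.star_eq] using star_left_conjugate_le_conjugate
            (star_mul_self_le_abs_add_smul_one_mul_self a hε.le) (↑u⁻¹ : A)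
      _ = 1 := by rw [← hu]; simp only [mul_assoc, Units.mul_inv, mul_one, Units.inv_mul]
  calc a + star a ≤ c + a * ↑u⁻¹ * star a :=
        hu ▸ add_star_le_add_mul_inv_mul_star a u (hu ▸ hc.nonneg)
    _ ≤ c + CFC.abs (star a) := add_le_add_right (mul_mul_star_le_abs_star a _ hu_inv hconj) c
    _ = CFC.abs a + CFC.abs (star a) + ε • 1 := add_right_comm _ _ _

theorem add_star_le_abs_add_abs_star (a : A) : a + star a ≤ CFC.abs a + CFC.abs (star a) := by
  have hlim : Tendsto (fun ε : ℝ => CFC.abs a + CFC.abs (star a) + ε • (1 : A)) (𝓝[>] 0)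
      (𝓝 (CFC.abs a + CFC.abs (star a))) := by
    have hcont : Continuous fun ε : ℝ => CFC.abs a + CFC.abs (star a) + ε • (1 : A) := by
      fun_prop
    simpa using (hcont.tendsto 0).mono_left nhdsWithin_le_nhds
  exact ge_of_tendsto hlim (eventually_nhdsWithin_of_forall fun ε hε =>
    add_star_le_abs_add_abs_star_add_smul_one a hε)

end CStarAlgebra

lemma Complex.abs_re_add_abs_im_le (z : ℂ) : |z.re| + |z.im| ≤ √2 * ‖z‖ := by
  rw [← Real.sqrt_sq (norm_nonneg z), ← Real.sqrt_mul zero_le_two, Complex.sq_norm,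
    Complex.normSq_apply]
  refine Real.le_sqrt_of_sq_le ?_
  nlinarith [sq_nonneg (|z.re| - |z.im|), sq_abs z.re, sq_abs z.im]

section InnerProductSpace

variable {E : Type*} [NormedAddCommGroup E] [InnerProductSpace ℂ E]

lemma re_inner_le_re_inner_of_le {S T : E →L[ℂ] E} (h : S ≤ T) (x : E) :
    (⟪S x, x⟫_ℂ).re ≤ (⟪T x, x⟫_ℂ).re := by
  have := ((le_def S T).mp h).re_inner_nonneg_left x
  rwa [sub_apply, inner_sub_left, map_sub, sub_nonneg] at this

lemma re_add_re_le_sqrt_two_mul_norm_inner {P Q : E →L[ℂ] E} (hP : 0 ≤ P) (hQ : 0 ≤ Q) (x : E) :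
    (⟪P x, x⟫_ℂ).re + (⟪Q x, x⟫_ℂ).re ≤ √2 * ‖⟪(P + Complex.I • Q) x, x⟫_ℂ‖ := by
  obtain ⟨hP_re, hP_im⟩ :=
    Complex.nonneg_iff.mp (((nonneg_iff_isPositive P).mp hP).inner_nonneg_left x)
  obtain ⟨hQ_re, hQ_im⟩ :=
    Complex.nonneg_iff.mp (((nonneg_iff_isPositive Q).mp hQ).inner_nonneg_left x)
  have hre : (⟪(P + Complex.I • Q) x, x⟫_ℂ).re = (⟪P x, x⟫_ℂ).re := by
    simp [← hQ_im]
  have him : (⟪(P + Complex.I • Q) x, x⟫_ℂ).im = -(⟪Q x, x⟫_ℂ).re := by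
    simp [← hP_im]
  have h := Complex.abs_re_add_abs_im_le ⟪(P + Complex.I • Q) x, x⟫_ℂ
  rwa [hre, him, abs_neg, abs_of_nonneg hP_re, abs_of_nonneg hQ_re] at h

lemma numRadius_nonneg (T : E →L[ℂ] E) : 0 ≤ numRadius T :=
  Real.iSup_nonneg fun _ => norm_nonneg _

lemma numRadius_le {T : E →L[ℂ] E} {c : ℝ} (hc : 0 ≤ c)
    (h : ∀ x : E, ‖x‖ = 1 → ‖⟪T x, x⟫_ℂ‖ ≤ c) : numRadius T ≤ c :=
  Real.iSup_le (fun x => h x.1 x.2) hc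

lemma norm_inner_le_numRadius (T : E →L[ℂ] E) {x : E} (hx : ‖x‖ = 1) :
    ‖⟪T x, x⟫_ℂ‖ ≤ numRadius T := by
  refine le_ciSup (f := fun y : {y : E // ‖y‖ = 1} => ‖⟪T y.1, y.1⟫_ℂ‖) ⟨‖T‖, ?_⟩ ⟨x, hx⟩
  rintro _ ⟨y, rfl⟩
  calc ‖⟪T y.1, y.1⟫_ℂ‖ ≤ ‖T y.1‖ * ‖y.1‖ := norm_inner_le_norm _ _
    _ ≤ ‖T‖ * ‖y.1‖ * ‖y.1‖ := by gcongr; exact T.le_opNorm y.1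
    _ = ‖T‖ := by rw [y.2, mul_one, mul_one]

end InnerProductSpace

lemma re_inner_add_adjoint_apply_self (T : H →L[ℂ] H) (x : H) :
    (⟪(T + adjoint T) x, x⟫_ℂ).re = 2 * (⟪T x, x⟫_ℂ).re := by
  rw [add_apply, inner_add_left, adjoint_inner_left, ← inner_conj_symm, Complex.add_re,
    Complex.conj_re]
  ring

lemma opAbs_add_opAbs_adjoint_nonneg (T : H →L[ℂ] H) : 0 ≤ opAbs T + opAbs (adjoint T) :=
  add_nonneg (CFC.abs_nonneg _) (CFC.abs_nonneg _)

lemma two_mul_norm_inner_le_re_inner_opAbs_add_opAbs_adjoint (T : H →L[ℂ] H) (x : H) :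
    2 * ‖⟪T x, x⟫_ℂ‖ ≤ (⟪(opAbs T + opAbs (adjoint T)) x, x⟫_ℂ).re := by
  set u := ⟪T x, x⟫_ℂ
  set p := (⟪(opAbs T + opAbs (adjoint T)) x, x⟫_ℂ).re
  have hp : 0 ≤ p := by
    simpa only [zero_apply, inner_zero_left, Complex.zero_re] using
      re_inner_le_re_inner_of_le (opAbs_add_opAbs_adjoint_nonneg T) x
  have hrot : u • T + adjoint (u • T) ≤ ‖u‖ • (opAbs T + opAbs (adjoint T)) := by
    change u • T + star (u • T) ≤ ‖u‖ • (CFC.abs T + CFC.abs (star T))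
    calc u • T + star (u • T) ≤ CFC.abs (u • T) + CFC.abs (star (u • T)) :=
          add_star_le_abs_add_abs_star (u • T)
      _ = ‖u‖ • (CFC.abs T + CFC.abs (star T)) := by
          rw [star_smul, CFC.abs_smul, CFC.abs_smul, norm_star, smul_add]
  -- `h` reads `2 ‖u‖² ≤ ‖u‖ p`
  have h := re_inner_le_re_inner_of_le hrot x
  rw [re_inner_add_adjoint_apply_self, smul_apply, inner_smul_left, Complex.conj_mul',
    smul_apply, ← Complex.coe_smul, inner_smul_left, Complex.conj_ofReal,
    Complex.re_ofReal_mul] at h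
  norm_cast at h
  nlinarith [norm_nonneg u]

theorem stmt_7 (A B : H →L[ℂ] H) :
    numRadius (A + B) ≤ (1 / Real.sqrt 2) *
      numRadius ((opAbs A + opAbs (adjoint A)) + Complex.I • (opAbs B + opAbs (adjoint B))) := by
  set P := opAbs A + opAbs (adjoint A)
  set Q := opAbs B + opAbs (adjoint B)
  refine numRadius_le (mul_nonneg (by positivity) (numRadius_nonneg _)) fun x hx => ?_
  have hA := two_mul_norm_inner_le_re_inner_opAbs_add_opAbs_adjoint A x
  have hB := two_mul_norm_inner_le_re_inner_opAbs_add_opAbs_adjoint B x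
  have hPQ := re_add_re_le_sqrt_two_mul_norm_inner (opAbs_add_opAbs_adjoint_nonneg A)
    (opAbs_add_opAbs_adjoint_nonneg B) x
  calc ‖⟪(A + B) x, x⟫_ℂ‖ ≤ ‖⟪A x, x⟫_ℂ‖ + ‖⟪B x, x⟫_ℂ‖ := by
        rw [add_apply, inner_add_left]; exact norm_add_le _ _
    _ ≤ √2 / 2 * ‖⟪(P + Complex.I • Q) x, x⟫_ℂ‖ := by linarith
    _ ≤ 1 / √2 * numRadius (P + Complex.I • Q) := by
        rw [Real.sqrt_div_self']; gcongr; exact norm_inner_le_numRadius _ hx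
end

section
/- If A and B are bounded self-adjoint operators on a complex Hilbert space, then ‖A + B‖² ≤ ω(A + iB)² + 2‖A‖‖B‖. -/
open scoped InnerProductSpace
open ContinuousLinearMap

variable {H : Type*} [NormedAddCommGroup H] [InnerProductSpace ℂ H] [CompleteSpace H]

/-
For a unit vector x put a = ⟪A x, x⟫ and b = ⟪B x, x⟫, both real. Then
|⟪(A + iB) x, x⟫|² = a² + b² ≤ ω(A + iB)² and ab ≤ ‖A‖‖B‖, so
⟪(A + B) x, x⟫² = a² + b² + 2ab ≤ ω(A + iB)² + 2‖A‖‖B‖. Since A + B is self-adjoint,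
‖A + B‖ is the supremum of |⟪(A + B) x, x⟫| over unit vectors.
-/

lemma ContinuousLinearMap.norm_inner_apply_self_le {𝕜 E : Type*} [RCLike 𝕜]
    [NormedAddCommGroup E] [InnerProductSpace 𝕜 E] (T : E →L[𝕜] E) (x : E) :
    ‖⟪T x, x⟫_𝕜‖ ≤ ‖T‖ * ‖x‖ ^ 2 :=
  calc ‖⟪T x, x⟫_𝕜‖ ≤ ‖T x‖ * ‖x‖ := norm_inner_le_norm _ _
    _ ≤ ‖T‖ * ‖x‖ * ‖x‖ := by gcongr; exact T.le_opNorm x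
    _ = ‖T‖ * ‖x‖ ^ 2 := by ring

open RCLike in
lemma ContinuousLinearMap.sq_norm_le_of_sq_re_inner_apply_self_le {𝕜 E : Type*} [RCLike 𝕜]
    [NormedAddCommGroup E] [InnerProductSpace 𝕜 E] {T : E →L[𝕜] E}
    (hT : (T : E →ₗ[𝕜] E).IsSymmetric) {c : ℝ} (hc : 0 ≤ c)
    (h : ∀ x, re ⟪T x, x⟫_𝕜 ^ 2 ≤ c * ‖x‖ ^ 4) : ‖T‖ ^ 2 ≤ c := by
  have hnorm : ‖T‖ ≤ √c := by
    rw [T.norm_eq_iSup_rayleighQuotient hT]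
    refine ciSup_le fun x => ?_
    rcases eq_or_ne x 0 with rfl | hx
    · simp
    rw [rayleighQuotient, reApplyInnerSelf_apply, abs_div, abs_sq, div_le_iff₀ (by positivity)]
    calc |re ⟪T x, x⟫_𝕜| ≤ √(c * (‖x‖ ^ 2) ^ 2) := Real.abs_le_sqrt (by linarith [h x])
      _ = √c * ‖x‖ ^ 2 := by rw [Real.sqrt_mul hc, Real.sqrt_sq (by positivity)]
  calc ‖T‖ ^ 2 ≤ √c ^ 2 := by gcongr
    _ = c := Real.sq_sqrt hc

lemma ContinuousLinearMap.bddAbove_range_norm_inner_apply_self {𝕜 E : Type*} [RCLike 𝕜]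
    [NormedAddCommGroup E] [InnerProductSpace 𝕜 E] (T : E →L[𝕜] E) :
    BddAbove (Set.range fun x : {x : E // ‖x‖ = 1} => ‖⟪T x.1, x.1⟫_𝕜‖) :=
  ⟨‖T‖, by
    rintro _ ⟨⟨x, hx⟩, rfl⟩
    simpa [hx] using T.norm_inner_apply_self_le x⟩

lemma norm_inner_apply_self_le_numRadius_mul {E : Type*} [NormedAddCommGroup E]
    [InnerProductSpace ℂ E] (T : E →L[ℂ] E) (x : E) :
    ‖⟪T x, x⟫_ℂ‖ ≤ numRadius T * ‖x‖ ^ 2 := by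
  rcases eq_or_ne x 0 with rfl | hx
  · simp
  have hu : ‖⟪T ((‖x‖⁻¹ : ℂ) • x), (‖x‖⁻¹ : ℂ) • x⟫_ℂ‖ ≤ numRadius T :=
    le_ciSup T.bddAbove_range_norm_inner_apply_self ⟨_, norm_smul_inv_norm hx⟩
  have hx' : 0 < ‖x‖ := norm_pos_iff.mpr hx
  rwa [map_smul, inner_smul_left, inner_smul_right, norm_mul, norm_mul, Complex.norm_conj,
    norm_inv, Complex.norm_real, norm_norm, inv_mul_le_iff₀ hx', inv_mul_le_iff₀ hx', ← mul_assoc,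
    ← sq, mul_comm] at hu

namespace LinearMap.IsSymmetric

variable {E : Type*} [NormedAddCommGroup E] [InnerProductSpace ℂ E] {A B : E →L[ℂ] E}

lemma sq_norm_inner_add_I_smul_apply_self (hA : (A : E →ₗ[ℂ] E).IsSymmetric)
    (hB : (B : E →ₗ[ℂ] E).IsSymmetric) (x : E) :
    ‖⟪(A + Complex.I • B) x, x⟫_ℂ‖ ^ 2 = (⟪A x, x⟫_ℂ).re ^ 2 + (⟪B x, x⟫_ℂ).re ^ 2 := by
  obtain ⟨a, ha⟩ : ∃ a : ℝ, ⟪A x, x⟫_ℂ = a := ⟨_, (hA.coe_re_inner_apply_self x).symm⟩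
  obtain ⟨b, hb⟩ : ∃ b : ℝ, ⟪B x, x⟫_ℂ = b := ⟨_, (hB.coe_re_inner_apply_self x).symm⟩
  have hsplit : ⟪(A + Complex.I • B) x, x⟫_ℂ = a + (-b : ℝ) * Complex.I := by
    rw [_root_.add_apply, _root_.smul_apply, inner_add_left, inner_smul_left, ha, hb,
      Complex.conj_I, Complex.ofReal_neg]
    ring
  rw [hsplit, ha, hb, Complex.sq_norm, Complex.normSq_add_mul_I, Complex.ofReal_re,
    Complex.ofReal_re, neg_sq]

lemma sq_re_inner_add_apply_self_le (hA : (A : E →ₗ[ℂ] E).IsSymmetric)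
    (hB : (B : E →ₗ[ℂ] E).IsSymmetric) (x : E) :
    (⟪(A + B) x, x⟫_ℂ).re ^ 2 ≤
      (numRadius (A + Complex.I • B) ^ 2 + 2 * ‖A‖ * ‖B‖) * ‖x‖ ^ 4 := by
  set a := (⟪A x, x⟫_ℂ).re
  set b := (⟪B x, x⟫_ℂ).re
  have hsum : (⟪(A + B) x, x⟫_ℂ).re = a + b := by
    rw [_root_.add_apply, inner_add_left, Complex.add_re]
  have hsq : a ^ 2 + b ^ 2 ≤ numRadius (A + Complex.I • B) ^ 2 * ‖x‖ ^ 4 := by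
    rw [← hA.sq_norm_inner_add_I_smul_apply_self hB x]
    calc _ ≤ (numRadius (A + Complex.I • B) * ‖x‖ ^ 2) ^ 2 :=
          pow_le_pow_left₀ (norm_nonneg _) (norm_inner_apply_self_le_numRadius_mul _ x) 2
      _ = _ := by ring
  have hcross : a * b ≤ ‖A‖ * ‖B‖ * ‖x‖ ^ 4 :=
    calc a * b ≤ |a| * |b| := by rw [← abs_mul]; exact le_abs_self _
      _ ≤ (‖A‖ * ‖x‖ ^ 2) * (‖B‖ * ‖x‖ ^ 2) := by
          gcongr
          · exact (Complex.abs_re_le_norm _).trans (A.norm_inner_apply_self_le x)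
          · exact (Complex.abs_re_le_norm _).trans (B.norm_inner_apply_self_le x)
      _ = ‖A‖ * ‖B‖ * ‖x‖ ^ 4 := by ring
  rw [hsum]
  linarith [add_sq a b]

end LinearMap.IsSymmetric

theorem stmt_15 (A B : H →L[ℂ] H) (hA : IsSelfAdjoint A) (hB : IsSelfAdjoint B) :
    ‖A + B‖ ^ 2 ≤ numRadius (A + Complex.I • B) ^ 2 + 2 * ‖A‖ * ‖B‖ :=
  sq_norm_le_of_sq_re_inner_apply_self_le (hA.add hB).isSymmetric (by positivity)
    (hA.isSymmetric.sq_re_inner_add_apply_self_le hB.isSymmetric)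
end
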